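/- arXiv:math/0501172 — 7 statements merged into one kernel-verified Lean document; each statement's English description precedes it below -/
import Mathlib

section
/- (Pestov identity for magnetic flows) For every smooth function φ: SM → ℝ, one has 2·(Hφ)·(V X_λ φ) = (X_λ φ)² + (Hφ)² − (K − Hλ + λ²)(Vφ)² + X_λ(Hφ·Vφ) − H(X_λφ·Vφ) + V(X_λφ·Hφ). -/
/-!
STATEMENT 1 (Pestov identity for magnetic flows).  On the unit sphere bundle
`SM` of a closed oriented Riemannian surface, with vector fields `X, H, V`
(modelled as derivations on functions `SM → ℝ`) satisfying `[V,X]=H`,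
`[V,H]=-X`, `[X,H]=KV`, λ the pullback of a smooth function on `M` (so `Vλ=0`),
and `X_λ = X + λV` the magnetic vector field, every smooth `φ : SM → ℝ`
satisfies
`2 Hφ · V X_λ φ = (X_λ φ)² + (Hφ)² − (K − Hλ + λ²)(Vφ)²
   + X_λ(Hφ·Vφ) − H(X_λ φ·Vφ) + V(X_λ φ·Hφ)`.
-/

theorem pestov_identity_magnetic {SM : Type*}
    (X H V : (SM → ℝ) → (SM → ℝ)) (K lam : SM → ℝ)
    (hXadd : ∀ f g : SM → ℝ, X (f + g) = X f + X g)
    (hHadd : ∀ f g : SM → ℝ, H (f + g) = H f + H g)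
    (hVadd : ∀ f g : SM → ℝ, V (f + g) = V f + V g)
    (hXleib : ∀ f g : SM → ℝ, X (f * g) = X f * g + f * X g)
    (hHleib : ∀ f g : SM → ℝ, H (f * g) = H f * g + f * H g)
    (hVleib : ∀ f g : SM → ℝ, V (f * g) = V f * g + f * V g)
    (hVX : ∀ f : SM → ℝ, V (X f) - X (V f) = H f)
    (hVH : ∀ f : SM → ℝ, V (H f) - H (V f) = -(X f))
    (hXH : ∀ f : SM → ℝ, X (H f) - H (X f) = K * V f)
    (hVlam : V lam = 0)
    (φ : SM → ℝ) :
    ∀ x : SM,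
      2 * H φ x * V (X φ + lam * V φ) x
        = (X φ x + lam x * V φ x) ^ 2 + (H φ x) ^ 2
          - (K x - H lam x + (lam x) ^ 2) * (V φ x) ^ 2
          + (X (H φ * V φ) x + lam x * V (H φ * V φ) x)
          - H ((X φ + lam * V φ) * V φ) x
          + V ((X φ + lam * V φ) * H φ) x := by
  intro x
  have e1 : V (X φ) x = X (V φ) x + H φ x := by
    have := congrFun (hVX φ) x
    simp only [Pi.sub_apply] at this; linarith
  have e2 : V (H φ) x = H (V φ) x - X φ x := by
    have := congrFun (hVH φ) x
    simp only [Pi.sub_apply, Pi.neg_apply] at this; linarith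
  have e3 : X (H φ) x = H (X φ) x + K x * V φ x := by
    have := congrFun (hXH φ) x
    simp only [Pi.sub_apply, Pi.mul_apply] at this; linarith
  simp only [add_mul, hVadd, hHadd, hXadd, hVleib, hHleib, hXleib, hVlam,
    Pi.add_apply, Pi.mul_apply, Pi.zero_apply, zero_mul, mul_zero, add_zero, zero_add]
  rw [e1, e2, e3]
  ring
end

section
/- The Pestov identity follows formally from the commutation relations alone: if X_λ, H, V are derivations on an algebra of smooth functions with [V,X_λ]=H, [V,H]=-X_λ+λV, and [X_λ,H]=-λX_λ+(K−Hλ+λ²)V for given functions λ and K, then for every smooth φ, 2(Hφ)(VX_λφ) − V(Hφ·X_λφ) = (X_λφ)² + (Hφ)² + X_λ(Vφ·Hφ) − H(Vφ·X_λφ) − (K−Hλ+λ²)(Vφ)². -/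
/-!
STATEMENT 2.  The Pestov identity follows formally from the commutation
relations alone: if `X_λ, H, V` are derivations on the (commutative) algebra of
functions on `SM` with `[V,X_λ]=H`, `[V,H]=-X_λ+λV`, `[X_λ,H]=-λX_λ+qV` where
`q = K − Hλ + λ²`, then for every `φ`,
`2(Hφ)(VX_λφ) − V(Hφ·X_λφ)
   = (X_λφ)² + (Hφ)² + X_λ(Vφ·Hφ) − H(Vφ·X_λφ) − (K−Hλ+λ²)(Vφ)²`.
-/

theorem pestov_identity_formal {A : Type*}
    (Xl H V : (A → ℝ) → (A → ℝ)) (K lam : A → ℝ)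
    (hXladd : ∀ f g : A → ℝ, Xl (f + g) = Xl f + Xl g)
    (hHadd : ∀ f g : A → ℝ, H (f + g) = H f + H g)
    (hVadd : ∀ f g : A → ℝ, V (f + g) = V f + V g)
    (hXlleib : ∀ f g : A → ℝ, Xl (f * g) = Xl f * g + f * Xl g)
    (hHleib : ∀ f g : A → ℝ, H (f * g) = H f * g + f * H g)
    (hVleib : ∀ f g : A → ℝ, V (f * g) = V f * g + f * V g)
    -- magnetic commutation relations, with q := K − Hλ + λ²
    (hVXl : ∀ f : A → ℝ, V (Xl f) - Xl (V f) = H f)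
    (hVH : ∀ f : A → ℝ, V (H f) - H (V f) = -Xl f + lam * V f)
    (hXlH : ∀ f : A → ℝ,
      Xl (H f) - H (Xl f) = -lam * Xl f + (K - H lam + lam ^ 2) * V f)
    (φ : A → ℝ) :
    ∀ x : A,
      2 * H φ x * V (Xl φ) x - V (H φ * Xl φ) x
        = (Xl φ x) ^ 2 + (H φ x) ^ 2
          + Xl (V φ * H φ) x - H (V φ * Xl φ) x
          - (K x - H lam x + (lam x) ^ 2) * (V φ x) ^ 2 := by
  intro x
  have h1 := congrFun (hVleib (H φ) (Xl φ)) x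
  have h2 := congrFun (hXlleib (V φ) (H φ)) x
  have h3 := congrFun (hHleib (V φ) (Xl φ)) x
  have h4 := congrFun (hVXl φ) x
  have h5 := congrFun (hVH φ) x
  have h6 := congrFun (hXlH φ) x
  simp only [Pi.add_apply, Pi.mul_apply, Pi.sub_apply, Pi.neg_apply, Pi.pow_apply] at h1 h2 h3 h4 h5 h6
  linear_combination (-1) * h1 - h2 + h3 + H φ x * h4 - Xl φ x * h5 - V φ x * h6
end

section
/- Integrating Pestov's identity over SM against an invariant measure: if μ is a finite measure on SM invariant under the flows of X_λ, H, and V (so that integrals of X_λ f, Hf, Vf vanish for smooth f), then 2∫ Hφ·VX_λφ dμ = ∫ (X_λφ)² dμ + ∫ (Hφ)² dμ − ∫ (K−Hλ+λ²)(Vφ)² dμ for all smooth φ. -/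
open MeasureTheory

/-!
STATEMENT 3.  Integrating Pestov's identity over `SM` against an invariant
(finite) measure `μ`: if `μ` is invariant under the flows of `X_λ`, `H`, `V`
(so integrals of `X_λ f`, `Hf`, `Vf` vanish), then
`2∫ Hφ·VX_λφ dμ = ∫ (X_λφ)² dμ + ∫ (Hφ)² dμ − ∫ (K−Hλ+λ²)(Vφ)² dμ`.
-/

theorem pestov_integrated {SM : Type*} [MeasurableSpace SM]
    (μ : Measure SM) [IsFiniteMeasure μ]
    (Xl H V : (SM → ℝ) → (SM → ℝ)) (K lam : SM → ℝ)
    (hXladd : ∀ f g : SM → ℝ, Xl (f + g) = Xl f + Xl g)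
    (hHadd : ∀ f g : SM → ℝ, H (f + g) = H f + H g)
    (hVadd : ∀ f g : SM → ℝ, V (f + g) = V f + V g)
    (hXlleib : ∀ f g : SM → ℝ, Xl (f * g) = Xl f * g + f * Xl g)
    (hHleib : ∀ f g : SM → ℝ, H (f * g) = H f * g + f * H g)
    (hVleib : ∀ f g : SM → ℝ, V (f * g) = V f * g + f * V g)
    -- magnetic commutation relations
    (hVXl : ∀ f : SM → ℝ, V (Xl f) - Xl (V f) = H f)
    (hVH : ∀ f : SM → ℝ, V (H f) - H (V f) = -Xl f + lam * V f)
    (hXlH : ∀ f : SM → ℝ,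
      Xl (H f) - H (Xl f) = -lam * Xl f + (K - H lam + lam ^ 2) * V f)
    -- μ is invariant under the three flows: total derivatives integrate to zero
    (hinv : ∀ f : SM → ℝ,
      (∫ x, Xl f x ∂μ) = 0 ∧ (∫ x, H f x ∂μ) = 0 ∧ (∫ x, V f x ∂μ) = 0)
    (φ : SM → ℝ)
    -- integrability of the terms appearing in Pestov's identity
    (h1 : Integrable (fun x => H φ x * V (Xl φ) x) μ)
    (h2 : Integrable (fun x => (Xl φ x) ^ 2) μ)
    (h3 : Integrable (fun x => (H φ x) ^ 2) μ)
    (h4 : Integrable (fun x => (K x - H lam x + (lam x) ^ 2) * (V φ x) ^ 2) μ)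
    (h5 : Integrable (Xl (H φ * V φ)) μ)
    (h6 : Integrable (H (Xl φ * V φ)) μ)
    (h7 : Integrable (V (Xl φ * H φ)) μ) :
    2 * ∫ x, H φ x * V (Xl φ) x ∂μ
      = (∫ x, (Xl φ x) ^ 2 ∂μ) + (∫ x, (H φ x) ^ 2 ∂μ)
        - ∫ x, (K x - H lam x + (lam x) ^ 2) * (V φ x) ^ 2 ∂μ := by
  obtain ⟨hX0, hH0, hV0⟩ := hinv (Xl φ * V φ)
  obtain ⟨hX1, hH1, hV1⟩ := hinv (H φ * V φ)
  obtain ⟨hX2, hH2, hV2⟩ := hinv (Xl φ * H φ)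
  have eV : V (Xl φ) = H φ + Xl (V φ) := by
    have h := hVXl φ
    funext x
    have := congrFun h x
    simp only [Pi.sub_apply, Pi.add_apply] at this ⊢
    linarith
  have eB : V (H φ) = H (V φ) - Xl φ + lam * V φ := by
    have h := hVH φ
    funext x
    have := congrFun h x
    simp only [Pi.sub_apply, Pi.add_apply, Pi.mul_apply, Pi.neg_apply] at this ⊢
    linarith
  have eC : Xl (H φ) = H (Xl φ) - lam * Xl φ + (K - H lam + lam ^ 2) * V φ := by
    have h := hXlH φ
    funext x
    have := congrFun h x
    simp only [Pi.sub_apply, Pi.add_apply, Pi.mul_apply, Pi.neg_apply,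
      Pi.pow_apply] at this ⊢
    linarith
  have key : ∀ x, 2 * (H φ x * V (Xl φ) x)
      = (V (Xl φ * H φ) x + Xl (H φ * V φ) x - H (Xl φ * V φ) x)
        + ((Xl φ x) ^ 2 + (H φ x) ^ 2
          - (K x - H lam x + (lam x) ^ 2) * (V φ x) ^ 2) := by
    intro x
    have e1 := congrFun (hVleib (Xl φ) (H φ)) x
    have e2 := congrFun (hXlleib (H φ) (V φ)) x
    have e3 := congrFun (hHleib (Xl φ) (V φ)) x
    have e4 := congrFun eV x
    have e5 := congrFun eB x
    have e6 := congrFun eC x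
    simp only [Pi.add_apply, Pi.sub_apply, Pi.mul_apply, Pi.pow_apply] at *
    rw [e1, e2, e3, e4, e5, e6]
    ring
  have hg : Integrable (fun x => (Xl φ x) ^ 2 + (H φ x) ^ 2
      - (K x - H lam x + (lam x) ^ 2) * (V φ x) ^ 2) μ := (h2.add h3).sub h4
  have hd : Integrable (fun x =>
      V (Xl φ * H φ) x + Xl (H φ * V φ) x - H (Xl φ * V φ) x) μ :=
    (h7.add h5).sub h6
  calc 2 * ∫ x, H φ x * V (Xl φ) x ∂μ
      = ∫ x, 2 * (H φ x * V (Xl φ) x) ∂μ := (integral_const_mul 2 _).symm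
    _ = ∫ x, (V (Xl φ * H φ) x + Xl (H φ * V φ) x - H (Xl φ * V φ) x)
          + ((Xl φ x) ^ 2 + (H φ x) ^ 2
            - (K x - H lam x + (lam x) ^ 2) * (V φ x) ^ 2) ∂μ := by
        exact integral_congr_ae (Filter.Eventually.of_forall key)
    _ = (∫ x, V (Xl φ * H φ) x + Xl (H φ * V φ) x - H (Xl φ * V φ) x ∂μ)
          + ∫ x, (Xl φ x) ^ 2 + (H φ x) ^ 2
            - (K x - H lam x + (lam x) ^ 2) * (V φ x) ^ 2 ∂μ :=
        integral_add hd hg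
    _ = ((∫ x, V (Xl φ * H φ) x ∂μ) + (∫ x, Xl (H φ * V φ) x ∂μ)
          - ∫ x, H (Xl φ * V φ) x ∂μ)
          + ((∫ x, (Xl φ x) ^ 2 ∂μ) + (∫ x, (H φ x) ^ 2 ∂μ)
            - ∫ x, (K x - H lam x + (lam x) ^ 2) * (V φ x) ^ 2 ∂μ) := by
        have e1 := integral_sub (h7.add h5) h6
        have e2 := integral_add h7 h5
        have e3 := integral_sub (h2.add h3) h4
        have e4 := integral_add h2 h3
        simp only [Pi.add_apply] at e1 e2 e3 e4
        rw [e1, e2, e3, e4]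
    _ = (∫ x, (Xl φ x) ^ 2 ∂μ) + (∫ x, (H φ x) ^ 2 ∂μ)
          - ∫ x, (K x - H lam x + (lam x) ^ 2) * (V φ x) ^ 2 ∂μ := by
        rw [hV2, hX1, hH0]; ring
end

section
/- (Main integral identity) For every smooth φ: SM → ℝ, ∫_{SM}[(X_λ Vφ)² − (K − Hλ + λ²)(Vφ)²] dμ = ∫_{SM}(V X_λ φ)² dμ − ∫_{SM}(X_λ φ)² dμ. -/
open MeasureTheory

/-!
STATEMENT 5 (Main integral identity).  For every smooth `φ : SM → ℝ`,
`∫_{SM} [(X_λ Vφ)² − (K − Hλ + λ²)(Vφ)²] dμ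
   = ∫_{SM} (V X_λ φ)² dμ − ∫_{SM} (X_λ φ)² dμ`,
with `X_λ, H, V` the magnetic, horizontal and vertical vector fields on the
unit sphere bundle `SM` (modelled as derivations satisfying the magnetic
commutation relations), `K` the Gaussian curvature and `μ` the Liouville
measure, invariant under all three fields.
-/

theorem magnetic_main_integral_identity {SM : Type*} [MeasurableSpace SM]
    (μ : Measure SM) [IsFiniteMeasure μ]
    (Xl H V : (SM → ℝ) → (SM → ℝ)) (K lam : SM → ℝ)
    (hXladd : ∀ f g : SM → ℝ, Xl (f + g) = Xl f + Xl g)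
    (hHadd : ∀ f g : SM → ℝ, H (f + g) = H f + H g)
    (hVadd : ∀ f g : SM → ℝ, V (f + g) = V f + V g)
    (hXlleib : ∀ f g : SM → ℝ, Xl (f * g) = Xl f * g + f * Xl g)
    (hHleib : ∀ f g : SM → ℝ, H (f * g) = H f * g + f * H g)
    (hVleib : ∀ f g : SM → ℝ, V (f * g) = V f * g + f * V g)
    (hVXl : ∀ f : SM → ℝ, V (Xl f) - Xl (V f) = H f)
    (hVH : ∀ f : SM → ℝ, V (H f) - H (V f) = -Xl f + lam * V f)
    (hXlH : ∀ f : SM → ℝ,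
      Xl (H f) - H (Xl f) = -lam * Xl f + (K - H lam + lam ^ 2) * V f)
    (hinv : ∀ f : SM → ℝ,
      (∫ x, Xl f x ∂μ) = 0 ∧ (∫ x, H f x ∂μ) = 0 ∧ (∫ x, V f x ∂μ) = 0)
    (φ : SM → ℝ)
    (h0 : Integrable (fun x => (Xl (V φ) x) ^ 2) μ)
    (h1 : Integrable (fun x => H φ x * V (Xl φ) x) μ)
    (h2 : Integrable (fun x => (Xl φ x) ^ 2) μ)
    (h3 : Integrable (fun x => (H φ x) ^ 2) μ)
    (h4 : Integrable (fun x => (K x - H lam x + (lam x) ^ 2) * (V φ x) ^ 2) μ)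
    (h5 : Integrable (Xl (H φ * V φ)) μ)
    (h6 : Integrable (H (Xl φ * V φ)) μ)
    (h7 : Integrable (V (Xl φ * H φ)) μ)
    (h8 : Integrable (fun x => (V (Xl φ) x) ^ 2) μ) :
    ∫ x, ((Xl (V φ) x) ^ 2
          - (K x - H lam x + (lam x) ^ 2) * (V φ x) ^ 2) ∂μ
      = (∫ x, (V (Xl φ) x) ^ 2 ∂μ) - ∫ x, (Xl φ x) ^ 2 ∂μ := by
  have key : ∀ x, (Xl (V φ) x) ^ 2 - (K x - H lam x + (lam x) ^ 2) * (V φ x) ^ 2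
      = (V (Xl φ) x) ^ 2 - (Xl φ x) ^ 2
        - (Xl (H φ * V φ) x - H (Xl φ * V φ) x + V (Xl φ * H φ) x) := by
    intro x
    have e1 := congrFun (hXlleib (H φ) (V φ)) x
    have e2 := congrFun (hHleib (Xl φ) (V φ)) x
    have e3 := congrFun (hVleib (Xl φ) (H φ)) x
    have c1 := congrFun (hVXl φ) x
    have c2 := congrFun (hVH φ) x
    have c3 := congrFun (hXlH φ) x
    simp only [Pi.sub_apply, Pi.add_apply, Pi.mul_apply, Pi.neg_apply, Pi.pow_apply] at e1 e2 e3 c1 c2 c3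
    linear_combination e1 - e2 + e3 + (V φ x) * c3 + (Xl φ x) * c2
      - (Xl (V φ) x + V (Xl φ) x) * c1
  have hC : Integrable (fun x => Xl (H φ * V φ) x - H (Xl φ * V φ) x + V (Xl φ * H φ) x) μ :=
    (h5.sub h6).add h7
  have h56 : Integrable (fun x => Xl (H φ * V φ) x - H (Xl φ * V φ) x) μ := h5.sub h6
  have h82 : Integrable (fun x => V (Xl φ) x ^ 2 - Xl φ x ^ 2) μ := h8.sub h2
  have hCint : (∫ x, (Xl (H φ * V φ) x - H (Xl φ * V φ) x + V (Xl φ * H φ) x) ∂μ) = 0 := by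
    rw [integral_add h56 h7, integral_sub h5 h6,
      (hinv (H φ * V φ)).1, (hinv (Xl φ * V φ)).2.1, (hinv (Xl φ * H φ)).2.2]
    ring
  calc ∫ x, ((Xl (V φ) x) ^ 2 - (K x - H lam x + (lam x) ^ 2) * (V φ x) ^ 2) ∂μ
      = ∫ x, ((V (Xl φ) x) ^ 2 - (Xl φ x) ^ 2
          - (Xl (H φ * V φ) x - H (Xl φ * V φ) x + V (Xl φ * H φ) x)) ∂μ := by
        exact integral_congr_ae (Filter.Eventually.of_forall key)
    _ = (∫ x, (V (Xl φ) x) ^ 2 ∂μ) - ∫ x, (Xl φ x) ^ 2 ∂μ := by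
        rw [integral_sub h82 hC, integral_sub h8 h2, hCint, sub_zero]
end

section
/- If φ: SM → ℝ is smooth and X_λ φ(x,v) = G(x) + ω_x(v) for a smooth function G on M and a smooth 1-form ω on M, then ∫_{SM}(V X_λ φ)² dμ − ∫_{SM}(X_λ φ)² dμ = −∫_{SM} G(x)² dμ ≤ 0. -/
open MeasureTheory

/-!
STATEMENT 6.  If `φ : SM → ℝ` is smooth and `X_λ φ(x,v) = G(x) + ω_x(v)` for a
smooth function `G` on `M` and a smooth 1-form `ω` on `M`, then
`∫ (V X_λ φ)² dμ − ∫ (X_λ φ)² dμ = −∫ G(x)² dμ ≤ 0`.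
Here `SM` is the unit sphere bundle with projection `π`, `μ` the Liouville
measure, invariant under the flip `σ : (x,v) ↦ (x,−v)` and the fiberwise
rotation `ρ : (x,v) ↦ (x,iv)`; the function of the 1-form `ω` is `w(x,v) =
ω_x(v)`, which is odd under `σ`, and `V` applied to `G∘π + w` gives
`(x,v) ↦ ω_x(iv) = w ∘ ρ`.
-/

theorem integral_inequality_from_one_form {M SM : Type*} [MeasurableSpace SM]
    (μ : Measure SM) [IsFiniteMeasure μ]
    (π : SM → M) (σ ρ : SM → SM)
    (hσ : MeasurePreserving σ μ μ) (hρ : MeasurePreserving ρ μ μ)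
    (hσπ : ∀ p, π (σ p) = π p) (hρπ : ∀ p, π (ρ p) = π p)
    (V Xl : (SM → ℝ) → (SM → ℝ))
    (G : M → ℝ) (w : SM → ℝ)
    -- w is the function of a 1-form: odd under the flip v ↦ -v
    (hwodd : ∀ p, w (σ p) = -w p)
    (φ : SM → ℝ)
    -- X_λ φ (x,v) = G(x) + ω_x(v)
    (hXlφ : ∀ p, Xl φ p = G (π p) + w p)
    -- V X_λ φ (x,v) = ω_x(iv)
    (hVXlφ : ∀ p, V (Xl φ) p = w (ρ p))
    (h1 : Integrable (fun p => (Xl φ p) ^ 2) μ)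
    (h2 : Integrable (fun p => (V (Xl φ) p) ^ 2) μ)
    (h3 : Integrable (fun p => (G (π p)) ^ 2) μ)
    (h4 : Integrable (fun p => (w p) ^ 2) μ)
    (h5 : Integrable (fun p => G (π p) * w p) μ) :
    (∫ p, (V (Xl φ) p) ^ 2 ∂μ) - (∫ p, (Xl φ p) ^ 2 ∂μ)
        = -(∫ p, (G (π p)) ^ 2 ∂μ) ∧
      (∫ p, (V (Xl φ) p) ^ 2 ∂μ) - (∫ p, (Xl φ p) ^ 2 ∂μ) ≤ 0 := by
  -- cross term vanishes by σ-invariance and oddness of w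
  have hcross : (∫ p, G (π p) * w p ∂μ) = 0 := by
    have h := MeasureTheory.integral_map (μ := μ) hσ.measurable.aemeasurable
      (f := fun p => G (π p) * w p) (by rw [hσ.map_eq]; exact h5.aestronglyMeasurable)
    rw [hσ.map_eq] at h
    have : (∫ p, G (π (σ p)) * w (σ p) ∂μ) = ∫ p, G (π p) * w p ∂μ := h.symm
    simp only [hσπ, hwodd, mul_neg] at this
    rw [integral_neg] at this
    linarith
  have hVeq : (∫ p, (V (Xl φ) p) ^ 2 ∂μ) = ∫ p, (w p) ^ 2 ∂μ := by
    have h := MeasureTheory.integral_map (μ := μ) hρ.measurable.aemeasurable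
      (f := fun p => (w p) ^ 2) (by rw [hρ.map_eq]; exact h4.aestronglyMeasurable)
    rw [hρ.map_eq] at h
    calc (∫ p, (V (Xl φ) p) ^ 2 ∂μ) = ∫ p, (w (ρ p)) ^ 2 ∂μ := by
          simp only [hVXlφ]
      _ = ∫ p, (w p) ^ 2 ∂μ := h.symm
  have hXeq : (∫ p, (Xl φ p) ^ 2 ∂μ)
      = (∫ p, (G (π p)) ^ 2 ∂μ) + 2 * (∫ p, G (π p) * w p ∂μ)
        + ∫ p, (w p) ^ 2 ∂μ := by
    have : (∫ p, (Xl φ p) ^ 2 ∂μ)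
        = ∫ p, ((G (π p)) ^ 2 + 2 * (G (π p) * w p) + (w p) ^ 2) ∂μ := by
      congr 1; ext p; rw [hXlφ]; ring
    have hI : Integrable (fun p => G (π p) ^ 2 + 2 * (G (π p) * w p)) μ :=
      h3.add (h5.const_mul 2)
    rw [this, integral_add hI h4, integral_add h3 (h5.const_mul 2),
      integral_const_mul]
  have hG2 : 0 ≤ ∫ p, (G (π p)) ^ 2 ∂μ :=
    integral_nonneg fun p => sq_nonneg _
  constructor
  · rw [hVeq, hXeq, hcross]; ring
  · rw [hVeq, hXeq, hcross]; linarith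
end

section
/- Let y be a nowhere-vanishing C² solution of ÿ + a(t)y = 0 on [0,T] with u := ẏ/y satisfying u(T) = u(0), and let z be C² with z(0)=z(T), ż(0)=ż(T). Then ∫₀^T(ż² − a z²)dt = ∫₀^T (d/dt(z/y))² y² dt ≥ 0, and equality forces z/y constant; if additionally y is not T-periodic (i.e., y(T) ≠ y(0)), then equality implies z ≡ 0. -/
open intervalIntegral

/-!
STATEMENT 11.  Let `y` be a nowhere-vanishing C² solution of `ÿ + a(t)y = 0`
on `[0,T]` whose logarithmic derivative `u = ẏ/y` satisfies `u(T) = u(0)`,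
and let `z` be C² with `z(0)=z(T)`, `ż(0)=ż(T)`.  Then
`∫₀^T (ż² − a z²) dt = ∫₀^T (d/dt(z/y))² y² dt ≥ 0`,
equality forces `z/y` constant, and if moreover `y` is not `T`-periodic
(`y(T) ≠ y(0)`), equality implies `z ≡ 0` on `[0,T]`.
-/

theorem index_form_nonneg_of_nonperiodic
    (T : ℝ) (hT : 0 < T)
    (a y z : ℝ → ℝ) (ha : Continuous a)
    (hy : ContDiff ℝ 2 y) (hz : ContDiff ℝ 2 z)
    (hy0 : ∀ t, y t ≠ 0)
    (hode : ∀ t, deriv (deriv y) t + a t * y t = 0)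
    (hu : deriv y T / y T = deriv y 0 / y 0)
    (hzper : z 0 = z T) (hzper' : deriv z 0 = deriv z T) :
    (∫ t in (0:ℝ)..T, ((deriv z t) ^ 2 - a t * (z t) ^ 2))
        = ∫ t in (0:ℝ)..T, (deriv (fun s => z s / y s) t) ^ 2 * (y t) ^ 2 ∧
    0 ≤ (∫ t in (0:ℝ)..T, ((deriv z t) ^ 2 - a t * (z t) ^ 2)) ∧
    ((∫ t in (0:ℝ)..T, ((deriv z t) ^ 2 - a t * (z t) ^ 2)) = 0 →
      ∃ c : ℝ, ∀ t ∈ Set.Icc (0:ℝ) T, z t = c * y t) ∧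
    (y T ≠ y 0 →
      (∫ t in (0:ℝ)..T, ((deriv z t) ^ 2 - a t * (z t) ^ 2)) = 0 →
      ∀ t ∈ Set.Icc (0:ℝ) T, z t = 0) := by
  have hyd : Differentiable ℝ y := hy.differentiable (by norm_num)
  have hzd : Differentiable ℝ z := hz.differentiable (by norm_num)
  have hy1 : ContDiff ℝ 1 (deriv y) :=
    ((contDiff_succ_iff_deriv (n := 1)).mp (by exact_mod_cast hy)).2.2
  have hyd' : Differentiable ℝ (deriv y) := hy1.differentiable one_ne_zero
  have hyc : Continuous y := hyd.continuous
  have hzc : Continuous z := hzd.continuous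
  have hy'c : Continuous (deriv y) := hy.continuous_deriv one_le_two
  have hz'c : Continuous (deriv z) := hz.continuous_deriv one_le_two
  have hy''c : Continuous (deriv (deriv y)) := hy1.continuous_deriv le_rfl
  set w : ℝ → ℝ := fun s => z s / y s with hw
  have hwd : ∀ t, HasDerivAt w ((deriv z t * y t - z t * deriv y t) / y t ^ 2) t := fun t =>
    ((hzd t).hasDerivAt).div ((hyd t).hasDerivAt) (hy0 t)
  have hwderiv : ∀ t, deriv w t = (deriv z t * y t - z t * deriv y t) / y t ^ 2 := fun t =>
    (hwd t).deriv
  -- g and its derivative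
  set g : ℝ → ℝ := fun t => z t ^ 2 * (deriv y t / y t) with hg
  set G : ℝ → ℝ := fun t =>
    (2 * z t * deriv z t) * (deriv y t / y t)
      + z t ^ 2 * ((deriv (deriv y) t * y t - deriv y t * deriv y t) / y t ^ 2) with hG
  have hgd : ∀ t, HasDerivAt g (G t) t := by
    intro t
    have h1 : HasDerivAt (fun s => z s ^ 2) (2 * z t * deriv z t) t := by
      have := ((hzd t).hasDerivAt).fun_pow 2
      simpa [mul_comm, mul_assoc, mul_left_comm] using this
    have h2 : HasDerivAt (fun s => deriv y s / y s)
        ((deriv (deriv y) t * y t - deriv y t * deriv y t) / y t ^ 2) t :=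
      ((hyd' t).hasDerivAt).div ((hyd t).hasDerivAt) (hy0 t)
    simpa [hG] using h1.fun_mul h2
  have hGc : Continuous G := by
    apply Continuous.add
    · exact ((continuous_const.mul hzc).mul hz'c).mul (hy'c.div hyc hy0)
    · exact (hzc.pow 2).mul
        (((hy''c.mul hyc).sub (hy'c.mul hy'c)).div (hyc.pow 2) fun t => pow_ne_zero 2 (hy0 t))
  -- pointwise identity
  have key : ∀ t, deriv z t ^ 2 - a t * z t ^ 2 = (deriv w t) ^ 2 * y t ^ 2 + G t := by
    intro t
    have h2 : deriv (deriv y) t = -(a t * y t) := by linarith [hode t]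
    rw [hwderiv t, hG]
    simp only [h2]
    field_simp [hy0 t]
    ring
  have hfc : Continuous fun t => (deriv w t) ^ 2 * y t ^ 2 := by
    have : Continuous (deriv w) := by
      have : deriv w = fun t => (deriv z t * y t - z t * deriv y t) / y t ^ 2 :=
        funext hwderiv
      rw [this]
      exact ((hz'c.mul hyc).sub (hzc.mul hy'c)).div (hyc.pow 2) fun t => pow_ne_zero 2 (hy0 t)
    exact (this.pow 2).mul (hyc.pow 2)
  -- the main integral identity
  have hGint : (∫ t in (0:ℝ)..T, G t) = g T - g 0 :=
    intervalIntegral.integral_eq_sub_of_hasDerivAt (fun t _ => hgd t)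
      (hGc.intervalIntegrable 0 T)
  have hGzero : g T - g 0 = 0 := by
    simp only [hg]
    rw [hu, ← hzper]
    ring
  have hmain : (∫ t in (0:ℝ)..T, ((deriv z t) ^ 2 - a t * (z t) ^ 2))
      = ∫ t in (0:ℝ)..T, (deriv w t) ^ 2 * (y t) ^ 2 := by
    have : (∫ t in (0:ℝ)..T, ((deriv z t) ^ 2 - a t * (z t) ^ 2))
        = ∫ t in (0:ℝ)..T, ((deriv w t) ^ 2 * y t ^ 2 + G t) := by
      congr 1; funext t; exact key t
    rw [this, intervalIntegral.integral_add (hfc.intervalIntegrable 0 T)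
      (hGc.intervalIntegrable 0 T), hGint, hGzero, add_zero]
  have hnonneg : 0 ≤ ∫ t in (0:ℝ)..T, (deriv w t) ^ 2 * (y t) ^ 2 :=
    intervalIntegral.integral_nonneg hT.le fun t _ => by positivity
  have hthird : (∫ t in (0:ℝ)..T, ((deriv z t) ^ 2 - a t * (z t) ^ 2)) = 0 →
      ∃ c : ℝ, ∀ t ∈ Set.Icc (0:ℝ) T, z t = c * y t := by
    intro heq
    have hzero : ∀ t ∈ Set.Icc (0:ℝ) T, (deriv w t) ^ 2 * (y t) ^ 2 = 0 := by
      intro t ht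
      by_contra hne
      have hpos : 0 < (deriv w t) ^ 2 * (y t) ^ 2 := by
        rcases lt_or_eq_of_le (by positivity : (0:ℝ) ≤ (deriv w t) ^ 2 * (y t) ^ 2) with h | h
        · exact h
        · exact absurd h.symm hne
      have : 0 < ∫ t in (0:ℝ)..T, (deriv w t) ^ 2 * (y t) ^ 2 :=
        intervalIntegral.integral_pos hT hfc.continuousOn (fun x _ => by positivity) ⟨t, ht, hpos⟩
      rw [← hmain] at this
      linarith
    have hderiv0 : ∀ t ∈ Set.Icc (0:ℝ) T, deriv w t = 0 := by
      intro t ht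
      have := hzero t ht
      have hy2 : (y t) ^ 2 ≠ 0 := pow_ne_zero 2 (hy0 t)
      have : (deriv w t) ^ 2 = 0 := by
        rcases mul_eq_zero.mp this with h | h
        · exact h
        · exact absurd h hy2
      exact pow_eq_zero_iff (by norm_num) |>.mp this
    have hconst : ∀ t ∈ Set.Icc (0:ℝ) T, w t = w 0 := by
      apply constant_of_has_deriv_right_zero
      · exact fun t _ => ((hwd t).continuousAt).continuousWithinAt
      · intro t ht
        have h0 : deriv w t = 0 := hderiv0 t (Set.Ico_subset_Icc_self ht)
        have := (hwd t).hasDerivWithinAt (s := Set.Ici t)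
        rw [hwderiv t] at h0
        rw [h0] at this
        exact this
    refine ⟨z 0 / y 0, fun t ht => ?_⟩
    have h := hconst t ht
    simp only [hw] at h
    rw [div_eq_div_iff (hy0 t) (hy0 0)] at h
    field_simp [hy0 0]
    linarith
  refine ⟨hmain, hmain ▸ hnonneg, hthird, ?_⟩
  intro hyne heq
  obtain ⟨c, hc⟩ := hthird heq
  have h0 : z 0 = c * y 0 := hc 0 ⟨le_rfl, hT.le⟩
  have hTT : z T = c * y T := hc T ⟨hT.le, le_rfl⟩
  have hc0 : c = 0 := by
    by_contra hne
    exact hyne (mul_left_cancel₀ hne (by rw [← h0, ← hTT]; exact hzper)).symm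
  intro t ht
  rw [hc t ht, hc0, zero_mul]
end

section
/- If the Anosov magnetic flow satisfies ∫_γ F dt ≥ 0 for every closed orbit γ and ∫_{SM} F dμ = 0 for the Liouville measure μ, where F := (X_λψ)² − (K − Hλ + λ²)ψ² for a smooth ψ: SM → ℝ, then ∫_γ F dt = 0 for every closed orbit; combined with the strict positivity of the index form (equality only at z≡0), ψ vanishes on every closed orbit, hence (closed orbits being dense) ψ ≡ 0. -/
open MeasureTheory intervalIntegral

/-!
STATEMENT 18.  Let `φ` be an Anosov magnetic flow on `SM` (unit sphere bundle
of a closed oriented surface), with generator `X_λ`, and let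
`F := (X_λψ)² − (K − Hλ + λ²)ψ²` for a smooth `ψ : SM → ℝ`.  Suppose
`∫_γ F dt ≥ 0` over every closed orbit and `∫_{SM} F dμ = 0` for the Liouville
measure `μ`.  By the nonnegative Livšic theorem (a consequence of the Anosov
property, recorded as hypothesis `hLivsic`), `∫_γ F dt = 0` for every closed
orbit; combined with the strict positivity of the index form (equality only at
`z ≡ 0`, hypothesis `hstrict`), `ψ` vanishes on every closed orbit; closed
orbits being dense (hypothesis `hdense`, again from the Anosov property),
`ψ ≡ 0`.
-/

theorem vanishing_from_nonneg_livsic {SM : Type*}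
    [TopologicalSpace SM] [MeasurableSpace SM]
    (μ : Measure SM)
    (φ : ℝ → SM → SM)
    (hφ0 : ∀ p, φ 0 p = p)
    (hφadd : ∀ s t p, φ (s + t) p = φ s (φ t p))
    (Xl H V : (SM → ℝ) → (SM → ℝ)) (K lam : SM → ℝ)
    (ψ : SM → ℝ) (hψ : Continuous ψ)
    (F : SM → ℝ) (hF : Continuous F)
    (hFdef : ∀ p,
      F p = (Xl ψ p) ^ 2 - (K p - H lam p + (lam p) ^ 2) * (ψ p) ^ 2)
    -- nonnegativity over every closed orbit
    (hnonneg : ∀ (p : SM) (T : ℝ), 0 < T → φ T p = p →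
      0 ≤ ∫ t in (0:ℝ)..T, F (φ t p))
    -- zero total integral against the Liouville measure
    (hzero : (∫ x, F x ∂μ) = 0)
    -- nonnegative Livšic theorem (Lopes–Thieullen, Pollicott–Sharp)
    (hLivsic : ∀ G : SM → ℝ, Continuous G →
      (∀ (p : SM) (T : ℝ), 0 < T → φ T p = p →
        0 ≤ ∫ t in (0:ℝ)..T, G (φ t p)) →
      (∫ x, G x ∂μ) = 0 →
      ∀ (p : SM) (T : ℝ), 0 < T → φ T p = p →
        (∫ t in (0:ℝ)..T, G (φ t p)) = 0)
    -- strict positivity of the index form: zero orbit integral forces ψ = 0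
    (hstrict : ∀ (p : SM) (T : ℝ), 0 < T → φ T p = p →
      (∫ t in (0:ℝ)..T, F (φ t p)) = 0 → ∀ t : ℝ, ψ (φ t p) = 0)
    -- density of closed orbits
    (hdense : ∀ U : Set SM, IsOpen U → U.Nonempty →
      ∃ (p : SM) (T : ℝ), 0 < T ∧ φ T p = p ∧ p ∈ U) :
    (∀ (p : SM) (T : ℝ), 0 < T → φ T p = p →
      (∫ t in (0:ℝ)..T, F (φ t p)) = 0) ∧
    ∀ p, ψ p = 0 := by
  have h1 : ∀ (p : SM) (T : ℝ), 0 < T → φ T p = p →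
      (∫ t in (0:ℝ)..T, F (φ t p)) = 0 := hLivsic F hF hnonneg hzero
  refine ⟨h1, fun p => ?_⟩
  by_contra hne
  obtain ⟨q, T, hT, hq, hqU⟩ := hdense {x | ψ x ≠ 0}
    (isOpen_compl_iff.mpr (isClosed_eq hψ continuous_const)) ⟨p, hne⟩
  exact hqU (by simpa [hφ0] using hstrict q T hT hq (h1 q T hT hq) 0)
end
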